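/- Let f : ℝ^d → ℝ be twice continuously differentiable with λmin·I ⪯ ∇²f(x) ⪯ λmax·I for all x and L-Lipschitz Hessian, with unique minimizer x*. Define N_ν = {x : ‖x - x*‖_{H*} ≤ ν·λmin^{3/2}/L} and N̄_ν = {x : f(x) ≤ f(x*) + ν·λmin³/L²}. Then for every ν ∈ (0,1], the inclusions N̄_{ν²/3} ⊆ N_ν ⊆ N̄_{ν²} hold. -/

import Mathlib

open Real
open scoped BigOperators Matrix

/-- Spectral norm (ℓ₂ operator norm) of a real matrix. -/
noncomputable def specNorm {d : ℕ} (A : Matrix (Fin d) (Fin d) ℝ) : ℝ :=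
  ‖Matrix.toEuclideanCLM (𝕜 := ℝ) A‖

/-- Euclidean (ℓ₂) norm of a vector. -/
noncomputable def vnorm {d : ℕ} (v : Fin d → ℝ) : ℝ := Real.sqrt (∑ i, v i ^ 2)

/-- The norm ‖v‖_A = √(vᵀAv) induced by a positive semidefinite matrix A. -/
noncomputable def Mnorm {d : ℕ} (A : Matrix (Fin d) (Fin d) ℝ) (v : Fin d → ℝ) : ℝ :=
  Real.sqrt (dotProduct v (A.mulVec v))

/-!
Along the segment from `x*` to `x`, the Lipschitz bound on the Hessian gives the Taylor estimate
`|f x - f x* - ‖x - x*‖²_{H*} / 2| ≤ L ‖x - x*‖³ / 6`, and the lower Hessian bound gives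
`λmin ‖x - x*‖² / 2 ≤ f x - f x*`. Under either hypothesis `‖x - x*‖ ≤ r := ν λmin / L`, and at
such distances the cubic term `L ‖x - x*‖³` is at most `λmin ‖x - x*‖²`, which is bounded both by
`‖x - x*‖²_{H*}` and by `2 (f x - f x*)`. The two inclusions are then linear inequalities.
-/

open Set

lemma vnorm_nonneg {d : ℕ} (v : Fin d → ℝ) : 0 ≤ vnorm v := Real.sqrt_nonneg _

lemma vnorm_eq_norm_toLp {d : ℕ} (v : Fin d → ℝ) : vnorm v = ‖WithLp.toLp 2 v‖ := by
  simp [vnorm, EuclideanSpace.norm_eq, sq_abs]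

lemma vnorm_smul {d : ℕ} (t : ℝ) (v : Fin d → ℝ) : vnorm (t • v) = |t| * vnorm v := by
  rw [vnorm_eq_norm_toLp, vnorm_eq_norm_toLp, WithLp.toLp_smul, norm_smul, Real.norm_eq_abs]

lemma abs_dotProduct_mulVec_le {d : ℕ} (A : Matrix (Fin d) (Fin d) ℝ) (v : Fin d → ℝ) :
    |v ⬝ᵥ A *ᵥ v| ≤ specNorm A * vnorm v ^ 2 := by
  rw [← Matrix.inner_toEuclideanCLM, specNorm, vnorm_eq_norm_toLp]
  set w : EuclideanSpace ℝ (Fin d) := WithLp.toLp 2 v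
  calc |inner ℝ w (Matrix.toEuclideanCLM (𝕜 := ℝ) A w)|
      ≤ ‖w‖ * ‖Matrix.toEuclideanCLM (𝕜 := ℝ) A w‖ := abs_real_inner_le_norm _ _
    _ ≤ ‖w‖ * (‖Matrix.toEuclideanCLM (𝕜 := ℝ) A‖ * ‖w‖) := by
      gcongr; exact ContinuousLinearMap.le_opNorm _ _
    _ = _ := by ring

lemma mul_vnorm_sq_le_dotProduct_mulVec {d : ℕ} {A : Matrix (Fin d) (Fin d) ℝ} {m : ℝ}
    (h : (A - m • (1 : Matrix (Fin d) (Fin d) ℝ)).PosSemidef) (v : Fin d → ℝ) :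
    m * vnorm v ^ 2 ≤ v ⬝ᵥ A *ᵥ v := by
  have hvv : v ⬝ᵥ v = vnorm v ^ 2 := by
    rw [vnorm, Real.sq_sqrt (Finset.sum_nonneg fun i _ => sq_nonneg _)]
    simp only [dotProduct, sq]
  simpa only [star_trivial, Matrix.sub_mulVec, Matrix.smul_mulVec, Matrix.one_mulVec,
    dotProduct_sub, dotProduct_smul, smul_eq_mul, sub_nonneg, hvv] using
    h.dotProduct_mulVec_nonneg v

lemma le_of_hasDerivAt_le {u u' w w' : ℝ → ℝ} {a b : ℝ}
    (hu : ∀ t, HasDerivAt u (u' t) t) (hw : ∀ t, HasDerivAt w (w' t) t)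
    (ha : u a ≤ w a) (h : ∀ t ∈ Ico a b, u' t ≤ w' t) : ∀ t ∈ Icc a b, u t ≤ w t :=
  image_le_of_deriv_right_le_deriv_boundary
    (fun t _ => (hu t).continuousAt.continuousWithinAt) (fun t _ => (hu t).hasDerivWithinAt) ha
    (fun t _ => (hw t).continuousAt.continuousWithinAt) (fun t _ => (hw t).hasDerivWithinAt) h

lemma le_of_deriv2_le_affine {φ φ' φ'' : ℝ → ℝ}
    (hφ : ∀ t, HasDerivAt φ (φ' t) t) (hφ' : ∀ t, HasDerivAt φ' (φ'' t) t) {C D : ℝ}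
    (h : ∀ t ∈ Icc (0 : ℝ) 1, φ'' t ≤ C + D * t) :
    φ 1 ≤ φ 0 + φ' 0 + C / 2 + D / 6 := by
  have hw' : ∀ t, HasDerivAt (fun t => φ' 0 + C * t + D * t ^ 2 / 2) (C + D * t) t := fun t => by
    refine ((((hasDerivAt_id' t).const_mul C).const_add (φ' 0)).add
      (((hasDerivAt_pow 2 t).const_mul D).div_const 2)).congr_deriv ?_
    push_cast; ring
  have hw : ∀ t, HasDerivAt (fun t => φ 0 + φ' 0 * t + C * t ^ 2 / 2 + D * t ^ 3 / 6)
      (φ' 0 + C * t + D * t ^ 2 / 2) t := fun t => by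
    refine (((((hasDerivAt_id' t).const_mul (φ' 0)).const_add (φ 0)).add
      (((hasDerivAt_pow 2 t).const_mul C).div_const 2)).add
      (((hasDerivAt_pow 3 t).const_mul D).div_const 6)).congr_deriv ?_
    push_cast; ring
  have hslope : ∀ t ∈ Icc (0 : ℝ) 1, φ' t ≤ φ' 0 + C * t + D * t ^ 2 / 2 :=
    le_of_hasDerivAt_le hφ' hw' (by simp) fun t ht => h t (Ico_subset_Icc_self ht)
  simpa using le_of_hasDerivAt_le hφ hw (by simp) (fun t ht => hslope t (Ico_subset_Icc_self ht))
    1 (right_mem_Icc.2 zero_le_one)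

lemma le_of_affine_le_deriv2 {φ φ' φ'' : ℝ → ℝ}
    (hφ : ∀ t, HasDerivAt φ (φ' t) t) (hφ' : ∀ t, HasDerivAt φ' (φ'' t) t) {C D : ℝ}
    (h : ∀ t ∈ Icc (0 : ℝ) 1, C + D * t ≤ φ'' t) :
    φ 0 + φ' 0 + C / 2 + D / 6 ≤ φ 1 := by
  have := le_of_deriv2_le_affine (φ := -φ) (φ' := -φ') (φ'' := -φ'') (C := -C) (D := -D)
    (fun t => (hφ t).neg) (fun t => (hφ' t).neg) fun t ht => by simp; linarith [h t ht]
  simp only [Pi.neg_apply] at this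
  linarith

lemma hasDerivAt_apply_add_smul {E G : Type*} [NormedAddCommGroup E] [NormedSpace ℝ E]
    [NormedAddCommGroup G] [NormedSpace ℝ G] {F : E → G} (hF : Differentiable ℝ F) (x v : E)
    (t : ℝ) : HasDerivAt (fun s : ℝ => F (x + s • v)) (fderiv ℝ F (x + t • v) v) t := by
  have hline : HasDerivAt (fun s : ℝ => x + s • v) v t := by
    simpa using ((hasDerivAt_id t).smul_const v).const_add x
  exact (hF _).hasFDerivAt.comp_hasDerivAt t hline

section Taylor

variable {d : ℕ} {f : (Fin d → ℝ) → ℝ} {g : (Fin d → ℝ) → Fin d → ℝ}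
  {H : (Fin d → ℝ) → Matrix (Fin d) (Fin d) ℝ}

lemma hasDerivAt_apply_add_smul_of_grad (hf : Differentiable ℝ f)
    (hgrad : ∀ y v, fderiv ℝ f y v = g y ⬝ᵥ v) (x v : Fin d → ℝ) (t : ℝ) :
    HasDerivAt (fun s : ℝ => f (x + s • v)) (g (x + t • v) ⬝ᵥ v) t :=
  hgrad _ v ▸ hasDerivAt_apply_add_smul hf x v t

lemma hasDerivAt_grad_apply_add_smul (hf : ContDiff ℝ 2 f)
    (hgrad : ∀ y v, fderiv ℝ f y v = g y ⬝ᵥ v)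
    (hhess : ∀ y u v, fderiv ℝ (fun z => fderiv ℝ f z v) y u = u ⬝ᵥ H y *ᵥ v)
    (x v : Fin d → ℝ) (t : ℝ) :
    HasDerivAt (fun s : ℝ => g (x + s • v) ⬝ᵥ v) (v ⬝ᵥ H (x + t • v) *ᵥ v) t := by
  have hdiff : Differentiable ℝ (fun z => fderiv ℝ f z v) :=
    ((hf.fderiv_right (by norm_num)).clm_apply contDiff_const).differentiable one_ne_zero
  simp only [← hgrad, ← hhess]
  exact hasDerivAt_apply_add_smul hdiff x v t

lemma add_le_of_hessian_lower (hf : ContDiff ℝ 2 f)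
    (hgrad : ∀ y v, fderiv ℝ f y v = g y ⬝ᵥ v)
    (hhess : ∀ y u v, fderiv ℝ (fun z => fderiv ℝ f z v) y u = u ⬝ᵥ H y *ᵥ v) {m : ℝ}
    (hlow : ∀ y, (H y - m • (1 : Matrix (Fin d) (Fin d) ℝ)).PosSemidef) (x v : Fin d → ℝ) :
    f x + g x ⬝ᵥ v + m * vnorm v ^ 2 / 2 ≤ f (x + v) := by
  have hφ := hasDerivAt_apply_add_smul_of_grad (hf.differentiable two_ne_zero) hgrad x v
  have := le_of_affine_le_deriv2 hφ (hasDerivAt_grad_apply_add_smul hf hgrad hhess x v)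
    (C := m * vnorm v ^ 2) (D := 0) fun t _ => by
      simpa using mul_vnorm_sq_le_dotProduct_mulVec (hlow (x + t • v)) v
  simpa using this

lemma abs_sub_taylor_le_of_lipschitz_hessian (hf : ContDiff ℝ 2 f)
    (hgrad : ∀ y v, fderiv ℝ f y v = g y ⬝ᵥ v)
    (hhess : ∀ y u v, fderiv ℝ (fun z => fderiv ℝ f z v) y u = u ⬝ᵥ H y *ᵥ v) {L : ℝ}
    (hLip : ∀ y z, specNorm (H y - H z) ≤ L * vnorm (y - z)) (x v : Fin d → ℝ) :
    |f (x + v) - f x - g x ⬝ᵥ v - v ⬝ᵥ H x *ᵥ v / 2| ≤ L * vnorm v ^ 3 / 6 := by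
  have hφ := hasDerivAt_apply_add_smul_of_grad (hf.differentiable two_ne_zero) hgrad x v
  have hφ' := hasDerivAt_grad_apply_add_smul hf hgrad hhess x v
  have hdev : ∀ t ∈ Icc (0 : ℝ) 1,
      |v ⬝ᵥ H (x + t • v) *ᵥ v - v ⬝ᵥ H x *ᵥ v| ≤ L * vnorm v ^ 3 * t := by
    intro t ht
    calc _ = |v ⬝ᵥ (H (x + t • v) - H x) *ᵥ v| := by rw [Matrix.sub_mulVec, dotProduct_sub]
      _ ≤ specNorm (H (x + t • v) - H x) * vnorm v ^ 2 := abs_dotProduct_mulVec_le _ _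
      _ ≤ L * vnorm (x + t • v - x) * vnorm v ^ 2 :=
        mul_le_mul_of_nonneg_right (hLip _ _) (sq_nonneg _)
      _ = L * vnorm v ^ 3 * t := by
        rw [add_sub_cancel_left, vnorm_smul, abs_of_nonneg ht.1]; ring
  have hup := le_of_deriv2_le_affine hφ hφ' (C := v ⬝ᵥ H x *ᵥ v) (D := L * vnorm v ^ 3)
    fun t ht => by linarith [(abs_le.1 (hdev t ht)).2]
  have hlo := le_of_affine_le_deriv2 hφ hφ' (C := v ⬝ᵥ H x *ᵥ v) (D := -(L * vnorm v ^ 3))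
    fun t ht => by linarith [(abs_le.1 (hdev t ht)).1]
  simp only [zero_smul, one_smul, add_zero] at hup hlo
  rw [abs_le]
  constructor <;> linarith

end Taylor

lemma mul_pow_three_le_mul_sq {m L a r : ℝ} (hm : 0 < m) (hL : 0 ≤ L) (ha : 0 ≤ a)
    (hr : 0 ≤ r) (hLr : L * r ≤ m) (h : m * a ^ 2 ≤ m * r ^ 2) : L * a ^ 3 ≤ m * a ^ 2 := by
  have har : a ≤ r := (pow_le_pow_iff_left₀ ha hr two_ne_zero).1 (le_of_mul_le_mul_left h hm)
  calc L * a ^ 3 = L * a * a ^ 2 := by ring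
    _ ≤ L * r * a ^ 2 := by gcongr
    _ ≤ m * a ^ 2 := by gcongr

theorem stmt18_general
    {d : ℕ} (f : (Fin d → ℝ) → ℝ) (g : (Fin d → ℝ) → Fin d → ℝ)
    (H : (Fin d → ℝ) → Matrix (Fin d) (Fin d) ℝ)
    (lmin L : ℝ) (hlmin : 0 < lmin) (hL : 0 < L)
    (hf : ContDiff ℝ 2 f)
    (hgrad : ∀ y v, fderiv ℝ f y v = dotProduct (g y) v)
    (hhess : ∀ y u v, fderiv ℝ (fun z => fderiv ℝ f z v) y u =
      dotProduct u ((H y).mulVec v))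
    (hlow : ∀ y, (H y - lmin • (1 : Matrix (Fin d) (Fin d) ℝ)).PosSemidef)
    (hLip : ∀ y z, specNorm (H y - H z) ≤ L * vnorm (y - z))
    (xstar : Fin d → ℝ) (hmin : ∀ y, f xstar ≤ f y)
    (ν : ℝ) (hν0 : 0 < ν) (hν1 : ν ≤ 1) :
    (∀ x : Fin d → ℝ, f x ≤ f xstar + (ν ^ 2 / 3) * lmin ^ 3 / L ^ 2 →
      Mnorm (H xstar) (x - xstar) ≤ ν * lmin ^ ((3 : ℝ) / 2) / L) ∧
    (∀ x : Fin d → ℝ, Mnorm (H xstar) (x - xstar) ≤ ν * lmin ^ ((3 : ℝ) / 2) / L →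
      f x ≤ f xstar + ν ^ 2 * lmin ^ 3 / L ^ 2) := by
  have hcrit (v : Fin d → ℝ) : g xstar ⬝ᵥ v = 0 := by
    have hloc : IsLocalMin f xstar := Filter.Eventually.of_forall hmin
    rw [← hgrad, hloc.fderiv_eq_zero]; rfl
  set r := ν * lmin / L
  have hr : 0 ≤ r := by positivity
  have hLr : L * r ≤ lmin := by
    rw [mul_div_cancel₀ _ hL.ne']; nlinarith
  have hR : 0 ≤ ν * lmin ^ ((3 : ℝ) / 2) / L := by positivity
  have hR2 : (ν * lmin ^ ((3 : ℝ) / 2) / L) ^ 2 = lmin * r ^ 2 := by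
    rw [div_pow, mul_pow, ← Real.rpow_mul_natCast hlmin.le]; norm_num; ring
  have hgap : ν ^ 2 * lmin ^ 3 / L ^ 2 = lmin * r ^ 2 := by ring
  have hlmr : 0 ≤ lmin * r ^ 2 := by positivity
  have hquad (x : Fin d → ℝ) := mul_vnorm_sq_le_dotProduct_mulVec (hlow xstar) (x - xstar)
  have hcube (x : Fin d → ℝ) :=
    mul_pow_three_le_mul_sq hlmin hL.le (vnorm_nonneg (x - xstar)) hr hLr
  have htaylor (x : Fin d → ℝ) := abs_le.1 <| by
    simpa only [add_sub_cancel, hcrit, sub_zero] using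
      abs_sub_taylor_le_of_lipschitz_hessian hf hgrad hhess hLip xstar (x - xstar)
  refine ⟨fun x hx => ?_, fun x hx => ?_⟩
  · rw [show ν ^ 2 / 3 * lmin ^ 3 / L ^ 2 = lmin * r ^ 2 / 3 by ring] at hx
    have hconv := add_le_of_hessian_lower hf hgrad hhess hlow xstar (x - xstar)
    rw [add_sub_cancel, hcrit] at hconv
    rw [Mnorm, Real.sqrt_le_left hR, hR2]
    linarith [htaylor x, hcube x (by linarith)]
  · rw [Mnorm, Real.sqrt_le_left hR, hR2] at hx
    rw [hgap]
    linarith [htaylor x, hcube x (by linarith [hquad x]), hquad x]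

/-- Lemma B.1 in the paper: the sandwich
`N̄_{ν²/3} ⊆ N_ν ⊆ N̄_{ν²}` between the iterate-neighborhood and the
function-value neighborhood of the optimum. -/
theorem stmt18
    {d : ℕ} (f : (Fin d → ℝ) → ℝ) (g : (Fin d → ℝ) → Fin d → ℝ)
    (H : (Fin d → ℝ) → Matrix (Fin d) (Fin d) ℝ)
    (lmin lmax L : ℝ) (hlmin : 0 < lmin) (hlle : lmin ≤ lmax) (hL : 0 < L)
    (hf : ContDiff ℝ 2 f)
    (hgrad : ∀ y v, fderiv ℝ f y v = dotProduct (g y) v)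
    (hhess : ∀ y u v, fderiv ℝ (fun z => fderiv ℝ f z v) y u =
      dotProduct u ((H y).mulVec v))
    (hHsym : ∀ y, (H y).IsSymm)
    (hlow : ∀ y, (H y - lmin • (1 : Matrix (Fin d) (Fin d) ℝ)).PosSemidef)
    (hup : ∀ y, (lmax • (1 : Matrix (Fin d) (Fin d) ℝ) - H y).PosSemidef)
    (hLip : ∀ y z, specNorm (H y - H z) ≤ L * vnorm (y - z))
    (xstar : Fin d → ℝ) (hmin : ∀ y, f xstar ≤ f y)
    (huniq : ∀ y, (∀ z, f y ≤ f z) → y = xstar)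
    (ν : ℝ) (hν0 : 0 < ν) (hν1 : ν ≤ 1) :
    (∀ x : Fin d → ℝ, f x ≤ f xstar + (ν ^ 2 / 3) * lmin ^ 3 / L ^ 2 →
      Mnorm (H xstar) (x - xstar) ≤ ν * lmin ^ ((3 : ℝ) / 2) / L) ∧
    (∀ x : Fin d → ℝ, Mnorm (H xstar) (x - xstar) ≤ ν * lmin ^ ((3 : ℝ) / 2) / L →
      f x ≤ f xstar + ν ^ 2 * lmin ^ 3 / L ^ 2) :=
  stmt18_general f g H lmin L hlmin hL hf hgrad hhess hlow hLip xstar hmin ν hν0 hν1
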